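/- arXiv:2312.03527 — 5 statements merged into one kernel-verified Lean document; each statement's English description precedes it below -/
import Mathlib

section
/- Let f : (-ε, ∞) → ℝ be a C¹ function with ε > 0. Then f is elliptic (i.e., 4t·(f'(t))² < 1 for all t in (-ε, ∞)) and satisfies f(0) = 0 if and only if the function g(x) = x - f(x²) is strictly increasing, satisfies g(0) = 0, and g'(x) ≠ 0 for all x ∈ ℝ. -/
/-- f elliptic with f(0)=0 iff g(x)=x-f(x²) is strictly increasing,
g(0)=0, and g'(x) ≠ 0 for all x. -/
theorem stmt_0 (ε : ℝ) (hε : 0 < ε) (f : ℝ → ℝ)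
    (hf : ContDiffOn ℝ 1 f (Set.Ioi (-ε))) :
    ((∀ t ∈ Set.Ioi (-ε), 4 * t * (deriv f t) ^ 2 < 1) ∧ f 0 = 0) ↔
      (StrictMono (fun x : ℝ => x - f (x ^ 2)) ∧
        (fun x : ℝ => x - f (x ^ 2)) 0 = 0 ∧
        ∀ x : ℝ, deriv (fun x : ℝ => x - f (x ^ 2)) x ≠ 0) := by
  set g : ℝ → ℝ := fun x => x - f (x ^ 2) with hg
  have hmem : ∀ x : ℝ, x ^ 2 ∈ Set.Ioi (-ε) := by
    intro x
    have : (0:ℝ) ≤ x ^ 2 := sq_nonneg x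
    simp only [Set.mem_Ioi]; linarith
  have key : ∀ x : ℝ, HasDerivAt g (1 - deriv f (x ^ 2) * (2 * x)) x := by
    intro x
    have hfx : DifferentiableAt ℝ f (x ^ 2) :=
      (hf.differentiableOn one_ne_zero).differentiableAt (isOpen_Ioi.mem_nhds (hmem x))
    have hpow : HasDerivAt (fun x : ℝ => x ^ 2) (2 * x) x := by
      simpa using hasDerivAt_pow 2 x
    have hcomp : HasDerivAt (f ∘ fun y : ℝ => y ^ 2) (deriv f (x ^ 2) * (2 * x)) x :=
      HasDerivAt.comp (h₂ := f) (h := fun y : ℝ => y ^ 2) x hfx.hasDerivAt hpow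
    exact (hasDerivAt_id' x).sub hcomp
  have hderiv : ∀ x : ℝ, deriv g x = 1 - deriv f (x ^ 2) * (2 * x) :=
    fun x => (key x).deriv
  constructor
  · rintro ⟨hell, hf0⟩
    have hpos : ∀ x : ℝ, 0 < deriv g x := by
      intro x
      rw [hderiv]
      have := hell (x ^ 2) (hmem x)
      nlinarith [sq_nonneg (deriv f (x ^ 2) * (2 * x) - 1),
        sq_nonneg (deriv f (x ^ 2) * (2 * x))]
    exact ⟨strictMono_of_deriv_pos hpos, by simpa [hg] using hf0,
      fun x => (hpos x).ne'⟩
  · rintro ⟨hmono, h0, hne⟩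
    have hpos : ∀ x : ℝ, 0 < deriv g x := by
      intro x
      have ht := hasDerivAt_iff_tendsto_slope.mp (key x)
      have hnn : 0 ≤ 1 - deriv f (x ^ 2) * (2 * x) := by
        refine ge_of_tendsto ht ?_
        filter_upwards [self_mem_nhdsWithin] with y hy
        have hy' : y ≠ x := hy
        rcases lt_or_gt_of_ne hy' with h | h
        · rw [slope_comm, slope_def_field]
          exact div_nonneg (sub_nonneg.2 (hmono h).le) (sub_nonneg.2 h.le)
        · rw [slope_def_field]
          exact div_nonneg (sub_nonneg.2 (hmono h).le) (sub_nonneg.2 h.le)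
      have := hne x
      rw [hderiv] at *
      exact lt_of_le_of_ne hnn (Ne.symm this)
    refine ⟨?_, by simpa [hg] using h0⟩
    intro t ht
    rcases le_or_gt 0 t with h | h
    · set x := Real.sqrt t with hx
      have hxt : x ^ 2 = t := Real.sq_sqrt h
      have h1 := hpos x
      have h2 := hpos (-x)
      rw [hderiv] at h1
      rw [hderiv, neg_sq] at h2
      rw [← hxt]
      nlinarith [mul_pos h1 h2]
    · nlinarith [sq_nonneg (deriv f t)]
end

section
/- Let f : (-ε, ∞) → ℝ be a C¹ function with ε > 0. Then f is elliptic (4t·(f'(t))² < 1 for all t ∈ (-ε, ∞)) and f(0) = 0 if and only if the function ḡ(x) = x + f(x²) is strictly increasing, satisfies ḡ(0) = 0, and ḡ'(x) ≠ 0 for all x ∈ ℝ. -/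
/-- f elliptic with f(0)=0 iff ḡ(x)=x+f(x²) is strictly increasing,
ḡ(0)=0, and ḡ'(x) ≠ 0 for all x. -/
theorem stmt_1 (ε : ℝ) (hε : 0 < ε) (f : ℝ → ℝ)
    (hf : ContDiffOn ℝ 1 f (Set.Ioi (-ε))) :
    ((∀ t ∈ Set.Ioi (-ε), 4 * t * (deriv f t) ^ 2 < 1) ∧ f 0 = 0) ↔
      (StrictMono (fun x : ℝ => x + f (x ^ 2)) ∧
        (fun x : ℝ => x + f (x ^ 2)) 0 = 0 ∧
        ∀ x : ℝ, deriv (fun x : ℝ => x + f (x ^ 2)) x ≠ 0) := by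
  have hmem : ∀ x : ℝ, (x : ℝ) ^ 2 ∈ Set.Ioi (-ε) := by
    intro x; simp only [Set.mem_Ioi]; nlinarith [sq_nonneg x]
  have hfd : ∀ x : ℝ, HasDerivAt (fun x : ℝ => x + f (x ^ 2))
      (1 + 2 * x * deriv f (x ^ 2)) x := by
    intro x
    have hdf : DifferentiableAt ℝ f (x ^ 2) :=
      (hf.differentiableOn one_ne_zero).differentiableAt (isOpen_Ioi.mem_nhds (hmem x))
    have h1 : HasDerivAt (fun y : ℝ => y ^ 2) (2 * x) x := by
      simpa using (hasDerivAt_pow 2 x)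
    have h2 : HasDerivAt (f ∘ fun y : ℝ => y ^ 2) (deriv f (x ^ 2) * (2 * x)) x :=
      HasDerivAt.comp_of_eq x hdf.hasDerivAt h1 rfl
    have h3 : HasDerivAt (id + f ∘ fun y : ℝ => y ^ 2) (1 + deriv f (x ^ 2) * (2 * x)) x :=
      (hasDerivAt_id x).add h2
    convert h3 using 1; rfl; ring
  constructor
  · rintro ⟨hell, hf0⟩
    have hpos : ∀ x : ℝ, 0 < deriv (fun x : ℝ => x + f (x ^ 2)) x := by
      intro x
      rw [(hfd x).deriv]
      have h := hell (x ^ 2) (hmem x)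
      nlinarith [sq_nonneg (2 * x * deriv f (x ^ 2) + 1)]
    refine ⟨strictMono_of_deriv_pos hpos, by simpa using hf0, fun x => (hpos x).ne'⟩
  · rintro ⟨hmono, h0, hne⟩
    have hf0 : f 0 = 0 := by simpa using h0
    have hpos : ∀ x : ℝ, 0 < deriv (fun x : ℝ => x + f (x ^ 2)) x := by
      intro x
      have hd := (hfd x).deriv
      have h0le : 0 ≤ deriv (fun x : ℝ => x + f (x ^ 2)) x := by
        rw [hd]
        refine ge_of_tendsto (hasDerivAt_iff_tendsto_slope.1 (hfd x)) ?_
        filter_upwards [self_mem_nhdsWithin] with y hy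
        rcases lt_or_gt_of_ne (Set.mem_compl_singleton_iff.mp hy) with h' | h'
        · have hle := (hmono h').le
          rw [slope_def_field, div_nonneg_iff]
          exact Or.inr ⟨by simpa using sub_nonpos.mpr hle, by linarith⟩
        · have hle := (hmono h').le
          rw [slope_def_field, div_nonneg_iff]
          exact Or.inl ⟨by simpa using sub_nonneg.mpr hle, by linarith⟩
      exact lt_of_le_of_ne h0le (Ne.symm (hne x))
    refine ⟨fun t ht => ?_, hf0⟩
    rcases le_or_gt t 0 with h | h
    · nlinarith [sq_nonneg (deriv f t), mul_nonneg (neg_nonneg.mpr h) (sq_nonneg (deriv f t))]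
    · set x := Real.sqrt t with hx
      have hx2 : x ^ 2 = t := Real.sq_sqrt h.le
      have hp := hpos x
      have hn := hpos (-x)
      rw [(hfd x).deriv] at hp
      rw [(hfd (-x)).deriv] at hn
      have hnx2 : (-x) ^ 2 = t := by rw [neg_pow]; simpa using hx2
      rw [hx2] at hp
      rw [hnx2] at hn
      nlinarith [mul_pos hp hn, hx2]
end

section
/- Let f : (-ε, ∞) → ℝ be a C¹ function with ε > 0, f(0) = 0, and 4t·(f'(t))² < 1 for all t ∈ (-ε, ∞). If κ₁, κ₂ ∈ ℝ satisfy (κ₁ + κ₂)/2 = f(((κ₁ - κ₂)/2)²), then κ₁·κ₂ ≤ 0; moreover κ₁·κ₂ = 0 if and only if κ₁ = 0 and κ₂ = 0. -/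
lemma key_lemma (ε : ℝ) (hε : 0 < ε) (f : ℝ → ℝ)
    (hf : ContDiffOn ℝ 1 f (Set.Ioi (-ε))) (hf0 : f 0 = 0)
    (hell : ∀ t ∈ Set.Ioi (-ε), 4 * t * (deriv f t) ^ 2 < 1)
    (t : ℝ) (ht : 0 < t) : (f t) ^ 2 < t := by
  have hsub : Set.Icc (0:ℝ) t ⊆ Set.Ioi (-ε) := by
    intro x hx
    have : -ε < 0 := by linarith
    exact lt_of_lt_of_le this hx.1
  have hfdiff : ∀ x ∈ Set.Icc (0:ℝ) t, DifferentiableAt ℝ f x := by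
    intro x hx
    exact (hf.differentiableOn one_ne_zero).differentiableAt
      (isOpen_Ioi.mem_nhds (hsub hx))
  have hcontf : ContinuousOn f (Set.Icc 0 t) := (hf.continuousOn.mono hsub)
  -- bound on derivative
  have hbound : ∀ x ∈ Set.Ioo (0:ℝ) t, |deriv f x| < 1 / (2 * Real.sqrt x) := by
    intro x hx
    have hx0 : 0 < x := hx.1
    have hsx : 0 < Real.sqrt x := Real.sqrt_pos.mpr hx0
    have h1 : 4 * x * (deriv f x) ^ 2 < 1 := hell x (by
      have : -ε < 0 := by linarith
      exact Set.mem_Ioi.mpr (lt_trans this hx0))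
    have h2 : (2 * Real.sqrt x * |deriv f x|) ^ 2 < 1 ^ 2 := by
      have : (2 * Real.sqrt x * |deriv f x|) ^ 2 = 4 * x * (deriv f x) ^ 2 := by
        rw [mul_pow, mul_pow, sq_abs, Real.sq_sqrt hx0.le]; ring
      rw [this]; simpa using h1
    have h3 : 2 * Real.sqrt x * |deriv f x| < 1 := by
      have hnn : 0 ≤ 2 * Real.sqrt x * |deriv f x| := by positivity
      nlinarith
    rw [lt_div_iff₀ (by positivity)]
    linarith [mul_comm (2 * Real.sqrt x) |deriv f x|]
  -- two strictly monotone functions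
  have hmono : ∀ (s : ℝ), (s = 1 ∨ s = -1) →
      StrictMonoOn (fun x => Real.sqrt x + s * f x) (Set.Icc 0 t) := by
    intro s hs
    apply StrictMonoOn.mono (s := Set.Icc 0 t) ?_ (le_refl _)
    apply strictMonoOn_of_deriv_pos (convex_Icc 0 t)
    · exact (Real.continuous_sqrt.continuousOn).add (continuous_const.continuousOn.mul hcontf)
    · intro x hx
      rw [interior_Icc] at hx
      have hx0 : 0 < x := hx.1
      have hsx : 0 < Real.sqrt x := Real.sqrt_pos.mpr hx0
      have hds : HasDerivAt Real.sqrt (1 / (2 * Real.sqrt x)) x :=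
        Real.hasDerivAt_sqrt hx0.ne'
      have hdf : HasDerivAt f (deriv f x) x :=
        (hfdiff x (Set.mem_Icc.mpr ⟨hx0.le, hx.2.le⟩)).hasDerivAt
      have hD : HasDerivAt (fun x => Real.sqrt x + s * f x)
          (1 / (2 * Real.sqrt x) + s * deriv f x) x := hds.add (hdf.const_mul s)
      rw [hD.deriv]
      have hb := hbound x hx
      have habs : |s * deriv f x| ≤ |deriv f x| := by
        rcases hs with h | h <;> simp [h]
      have : -(1 / (2 * Real.sqrt x)) < s * deriv f x := by
        have := (abs_lt.mp (lt_of_le_of_lt habs hb)).1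
        linarith
      linarith
  have h0mem : (0:ℝ) ∈ Set.Icc (0:ℝ) t := Set.mem_Icc.mpr ⟨le_refl _, ht.le⟩
  have htmem : t ∈ Set.Icc (0:ℝ) t := Set.mem_Icc.mpr ⟨ht.le, le_refl _⟩
  have h1 := hmono 1 (Or.inl rfl) h0mem htmem ht
  have h2 := hmono (-1) (Or.inr rfl) h0mem htmem ht
  simp [Real.sqrt_zero, hf0] at h1 h2
  have hst : 0 < Real.sqrt t := Real.sqrt_pos.mpr ht
  have habs : |f t| < Real.sqrt t := abs_lt.mpr ⟨by linarith, by linarith⟩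
  calc (f t) ^ 2 = |f t| ^ 2 := (sq_abs _).symm
    _ < Real.sqrt t ^ 2 := by
        apply pow_lt_pow_left₀ habs (abs_nonneg _)
        norm_num
    _ = t := Real.sq_sqrt ht.le

/-- principal curvatures satisfying the minimal-type Weingarten relation
have κ₁κ₂ ≤ 0, with equality iff both vanish. -/
theorem stmt_3 (ε : ℝ) (hε : 0 < ε) (f : ℝ → ℝ)
    (hf : ContDiffOn ℝ 1 f (Set.Ioi (-ε))) (hf0 : f 0 = 0)
    (hell : ∀ t ∈ Set.Ioi (-ε), 4 * t * (deriv f t) ^ 2 < 1)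
    (κ₁ κ₂ : ℝ) (hrel : (κ₁ + κ₂) / 2 = f (((κ₁ - κ₂) / 2) ^ 2)) :
    κ₁ * κ₂ ≤ 0 ∧ (κ₁ * κ₂ = 0 ↔ κ₁ = 0 ∧ κ₂ = 0) := by
  set t := ((κ₁ - κ₂) / 2) ^ 2 with ht_def
  have ht0 : 0 ≤ t := sq_nonneg _
  have hprod : κ₁ * κ₂ = ((κ₁ + κ₂) / 2) ^ 2 - t := by rw [ht_def]; ring
  rcases eq_or_lt_of_le ht0 with heq | hlt
  · -- t = 0 : κ₁ = κ₂ and f 0 = 0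
    have hκ : κ₁ = κ₂ := by
      have := pow_eq_zero_iff (n := 2) (by norm_num) |>.mp heq.symm
      linarith [this]
    have hsum : (κ₁ + κ₂) / 2 = 0 := by rw [hrel, ← heq, hf0]
    have hκ1 : κ₁ = 0 := by linarith
    have hκ2 : κ₂ = 0 := by linarith
    subst hκ1; subst hκ2
    simp
  · -- t > 0 : f t ^ 2 < t, so the product is negative
    have hkey := key_lemma ε hε f hf hf0 hell t hlt
    have hneg : κ₁ * κ₂ < 0 := by
      rw [hprod, hrel]
      have : f t ^ 2 < t := hkey
      linarith
    refine ⟨hneg.le, ?_⟩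
    constructor
    · intro h; exact absurd h hneg.ne
    · rintro ⟨h1, h2⟩
      exfalso
      rw [h1, h2] at hneg
      simp at hneg
end

section
/- Let f : (-ε, ∞) → ℝ be a C¹ elliptic function with f(0) = 0 (so 4t·(f'(t))² < 1 on (-ε, ∞)). Then the limits l = lim_{r→−∞} (r − f(r²)) and L = lim_{r→+∞} (r − f(r²)) exist in the extended reals, with l ∈ [−∞, 0) and L ∈ (0, +∞]. -/
/-- the limits l = lim_{r→−∞} (r − f(r²)) and L = lim_{r→+∞} (r − f(r²))
exist in the extended reals, with l ∈ [−∞,0) and L ∈ (0,+∞]. -/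
theorem stmt_4 (ε : ℝ) (hε : 0 < ε) (f : ℝ → ℝ)
    (hf : ContDiffOn ℝ 1 f (Set.Ioi (-ε))) (hf0 : f 0 = 0)
    (hell : ∀ t ∈ Set.Ioi (-ε), 4 * t * (deriv f t) ^ 2 < 1) :
    ∃ l L : EReal, l < 0 ∧ 0 < L ∧
      Filter.Tendsto (fun r : ℝ => ((r - f (r ^ 2) : ℝ) : EReal)) Filter.atBot (nhds l) ∧
      Filter.Tendsto (fun r : ℝ => ((r - f (r ^ 2) : ℝ) : EReal)) Filter.atTop (nhds L) := by
  set g : ℝ → ℝ := fun r => r - f (r ^ 2) with hg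
  have hopen : IsOpen (Set.Ioi (-ε)) := isOpen_Ioi
  have hdiff : ∀ t ∈ Set.Ioi (-ε), HasDerivAt f (deriv f t) t := by
    intro t ht
    have := ((hf.differentiableOn one_ne_zero).differentiableAt (hopen.mem_nhds ht))
    exact this.hasDerivAt
  have hmem : ∀ r : ℝ, (r ^ 2 : ℝ) ∈ Set.Ioi (-ε) := by
    intro r
    have : (0:ℝ) ≤ r ^ 2 := sq_nonneg r
    simp only [Set.mem_Ioi]; linarith
  have hgd : ∀ r : ℝ, HasDerivAt g (1 - deriv f (r ^ 2) * (2 * r)) r := by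
    intro r
    have h1 : HasDerivAt (fun r : ℝ => r ^ 2) (2 * r) r := by
      simpa using (hasDerivAt_pow 2 r)
    have h2 : HasDerivAt (fun r : ℝ => f (r ^ 2)) (deriv f (r ^ 2) * (2 * r)) r :=
      HasDerivAt.comp r (hdiff _ (hmem r)) h1
    exact (hasDerivAt_id r).sub h2
  have hpos : ∀ r : ℝ, 0 < 1 - deriv f (r ^ 2) * (2 * r) := by
    intro r
    have h := hell _ (hmem r)
    nlinarith [sq_nonneg (deriv f (r ^ 2) * (2 * r))]
  have hsm : StrictMono g :=
    strictMono_of_hasDerivAt_pos hgd hpos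
  have hg0 : g 0 = 0 := by simp [hg, hf0]
  have hmono : Monotone (fun r : ℝ => ((g r : ℝ) : EReal)) := fun a b hab =>
    EReal.coe_le_coe_iff.mpr (hsm.monotone hab)
  refine ⟨⨅ r : ℝ, ((g r : ℝ) : EReal), ⨆ r : ℝ, ((g r : ℝ) : EReal), ?_, ?_, ?_, ?_⟩
  · refine lt_of_le_of_lt (iInf_le _ (-1)) ?_
    have : g (-1) < 0 := by rw [← hg0]; exact hsm (by norm_num)
    exact_mod_cast this
  · refine lt_of_lt_of_le ?_ (le_iSup _ 1)
    have : 0 < g 1 := by rw [← hg0]; exact hsm (by norm_num)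
    exact_mod_cast this
  · exact tendsto_atBot_iInf hmono
  · exact tendsto_atTop_iSup hmono
end

section
/- Let f be elliptic of minimal type (f ∈ C¹((-ε,∞)), f(0) = 0, 4t f'(t)² < 1) and let ρ, t, h give a unit-speed generating curve with t'(s) > 0 and κ₁(s) + κ₂(s) = 2f(((κ₁(s)−κ₂(s))/2)²) where κ₁, κ₂ are given by the rotational formulas κ₁ = (e^{2h}h'(ρ)t'² − ρ'')/(e^{h}t') and κ₂ = e^{h}t'/ρ with ρ > 0, h'(x) > 0. If ρ''(s̄) ≤ 0 at some s̄, then κ₁(s̄) > 0 and κ₂(s̄) > 0, contradicting κ₁κ₂ ≤ 0; hence ρ''(s) > 0 for all s. -/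
/-- Auxiliary: for an elliptic function of minimal type, `f x ^ 2 ≤ x` on `x ≥ 0`. -/
lemma stmt_19_aux (ε : ℝ) (hε : 0 < ε) (f : ℝ → ℝ)
    (hf : ContDiffOn ℝ 1 f (Set.Ioi (-ε))) (hf0 : f 0 = 0)
    (hell : ∀ t ∈ Set.Ioi (-ε), 4 * t * (deriv f t) ^ 2 < 1) :
    ∀ x : ℝ, 0 ≤ x → f x ^ 2 ≤ x := by
  have hsub : Set.Ici (0:ℝ) ⊆ Set.Ioi (-ε) := fun y hy => lt_of_lt_of_le (by linarith : -ε < 0) hy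
  have hdiff : ∀ y ∈ Set.Ioi (-ε), DifferentiableAt ℝ f y := fun y hy =>
    (hf.differentiableOn one_ne_zero).differentiableAt (isOpen_Ioi.mem_nhds hy)
  have hcont : ContinuousOn f (Set.Ici (0:ℝ)) := (hf.continuousOn).mono hsub
  have hbound : ∀ y : ℝ, 0 < y → |deriv f y| < 1 / (2 * Real.sqrt y) := by
    intro y hy
    have hmem : y ∈ Set.Ioi (-ε) := by simp [Set.mem_Ioi]; linarith
    have h1 := hell y hmem
    have hs : 0 < Real.sqrt y := Real.sqrt_pos.mpr hy
    rw [lt_div_iff₀ (by positivity)]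
    have hsq : Real.sqrt y ^ 2 = y := Real.sq_sqrt hy.le
    nlinarith [abs_nonneg (deriv f y), sq_abs (deriv f y)]
  -- strict monotonicity of sqrt ∓ f on [0,∞)
  have key : ∀ (c : ℝ), c = 1 ∨ c = -1 →
      StrictMonoOn (fun y => Real.sqrt y + c * f y) (Set.Ici (0:ℝ)) := by
    intro c hc
    apply strictMonoOn_of_deriv_pos (f := fun y => Real.sqrt y + c * f y) (convex_Ici 0)
      (Real.continuous_sqrt.continuousOn.add (continuousOn_const.mul hcont))
    intro y hy
    rw [interior_Ici] at hy
    have hy' : (0:ℝ) < y := hy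
    have hds : HasDerivAt Real.sqrt (1 / (2 * Real.sqrt y)) y :=
      Real.hasDerivAt_sqrt (ne_of_gt hy')
    have hdf : HasDerivAt f (deriv f y) y := (hdiff y (hsub (le_of_lt hy'))).hasDerivAt
    have : HasDerivAt (fun y => Real.sqrt y + c * f y)
        (1 / (2 * Real.sqrt y) + c * deriv f y) y := hds.add (hdf.const_mul c)
    rw [this.deriv]
    have hb := hbound y hy'
    rcases hc with rfl | rfl <;>
      cases abs_lt.mp hb with
      | intro h1 h2 => linarith
  intro x hx
  rcases eq_or_lt_of_le hx with rfl | hx'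
  · simp [hf0]
  · have h1 := key 1 (Or.inl rfl) (Set.self_mem_Ici) (Set.mem_Ici.mpr hx) hx'
    have h2 := key (-1) (Or.inr rfl) (Set.self_mem_Ici) (Set.mem_Ici.mpr hx) hx'
    simp [hf0] at h1 h2
    have hsq : Real.sqrt x ^ 2 = x := Real.sq_sqrt hx
    nlinarith

/-- core computation of Lemma 4.3: with h' > 0, ρ > 0, t' > 0 and the
elliptic minimal-type Weingarten relation for the rotational principal curvatures,
ρ''(sb) ≤ 0 would force κ₁(sb) > 0 and κ₂(sb) > 0 (contradicting κ₁κ₂ ≤ 0);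
hence ρ'' > 0 everywhere. -/
theorem stmt_19 (ε : ℝ) (hε : 0 < ε) (f : ℝ → ℝ)
    (hf : ContDiffOn ℝ 1 f (Set.Ioi (-ε))) (hf0 : f 0 = 0)
    (hell : ∀ t ∈ Set.Ioi (-ε), 4 * t * (deriv f t) ^ 2 < 1)
    (h : ℝ → ℝ) (hh : Differentiable ℝ h) (hh' : ∀ x : ℝ, 0 < deriv h x)
    (ρ t : ℝ → ℝ) (hρ : ContDiff ℝ 2 ρ) (ht : ContDiff ℝ 2 t)
    (hρpos : ∀ s : ℝ, 0 < ρ s) (htpos : ∀ s : ℝ, 0 < deriv t s)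
    (harc : ∀ s : ℝ,
      Real.exp (2 * h (ρ s)) * (deriv t s) ^ 2 + (deriv ρ s) ^ 2 = 1)
    (κ₁ κ₂ : ℝ → ℝ)
    (hκ₁ : ∀ s : ℝ, κ₁ s =
      (Real.exp (2 * h (ρ s)) * deriv h (ρ s) * (deriv t s) ^ 2 - deriv (deriv ρ) s) /
        (Real.exp (h (ρ s)) * deriv t s))
    (hκ₂ : ∀ s : ℝ, κ₂ s = Real.exp (h (ρ s)) * deriv t s / ρ s)
    (hrel : ∀ s : ℝ, κ₁ s + κ₂ s = 2 * f (((κ₁ s - κ₂ s) / 2) ^ 2)) :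
    (∀ sb : ℝ, deriv (deriv ρ) sb ≤ 0 → 0 < κ₁ sb ∧ 0 < κ₂ sb) ∧
      ∀ s : ℝ, 0 < deriv (deriv ρ) s := by
  have hkk : ∀ s : ℝ, κ₁ s * κ₂ s ≤ 0 := by
    intro s
    have hb := stmt_19_aux ε hε f hf hf0 hell (((κ₁ s - κ₂ s) / 2) ^ 2) (sq_nonneg _)
    have hr := hrel s
    have hfv : f (((κ₁ s - κ₂ s) / 2) ^ 2) = (κ₁ s + κ₂ s) / 2 := by linarith
    rw [hfv] at hb
    nlinarith
  have claim1 : ∀ sb : ℝ, deriv (deriv ρ) sb ≤ 0 → 0 < κ₁ sb ∧ 0 < κ₂ sb := by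
    intro sb hsb
    constructor
    · rw [hκ₁ sb]
      apply div_pos
      · have : 0 < Real.exp (2 * h (ρ sb)) * deriv h (ρ sb) * (deriv t sb) ^ 2 := by
          have := hh' (ρ sb); have := htpos sb; positivity
        linarith
      · exact mul_pos (Real.exp_pos _) (htpos sb)
    · rw [hκ₂ sb]
      exact div_pos (mul_pos (Real.exp_pos _) (htpos sb)) (hρpos sb)
  refine ⟨claim1, fun s => ?_⟩
  by_contra hle
  push_neg at hle
  obtain ⟨h1, h2⟩ := claim1 s hle
  nlinarith [hkk s]
end
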